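/- Uniform bound on the regularized posterior second moment: for ρ ∈ (0, 1], all (x1, x2), and n ≥ 2πσ1σ2 e^{1/e}, Σ_j (t_{j1} − x1)² p(x1,x2; t_{j1}, t_{j2}) / (ρ + Σ_j p(x1,x2; t_{j1}, t_{j2})) ≤ (2σ1²/ρ) log(n/(2πσ1σ2)), where the sum is over j = 1, …, n. -/

import Mathlib

open Real

/-- Standard normal density. -/
noncomputable def gphi (x : ℝ) : ℝ := (Real.sqrt (2 * Real.pi))⁻¹ * Real.exp (-x ^ 2 / 2)

/-- Joint density of two independent normals with means `(t1, t2)` and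
standard deviations `(σ1, σ2)`. -/
noncomputable def pdens (σ1 σ2 t1 t2 x1 x2 : ℝ) : ℝ :=
  gphi ((x1 - t1) / σ1) * gphi ((x2 - t2) / σ2) / (σ1 * σ2)

/-!
With `q = 2πσ1σ2`, every density value satisfies `q p_j ≤ exp (-(x1 - t_{j1})² / (2σ1²))`, so
`(t_{j1} - x1)² p_j ≤ 2σ1² (-p_j log p_j - p_j log q)`. By concavity of `x ↦ -x log x`, the
entropy sum `Σ_j -p_j log p_j` is at most `y log n - y log y` with `y = Σ_j p_j`, so the
numerator is at most `2σ1² (y L - y log y)` where `L = log (n / q)`. Finally `-y log y ≤ 1/e ≤ L`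
and `ρ ≤ 1` give `ρ (y L - y log y) ≤ L (ρ + y)`.
-/

open Finset

lemma negMulLog_le_exp_neg_one {x : ℝ} (hx : 0 ≤ x) : negMulLog x ≤ exp (-1) := by
  rcases hx.eq_or_lt with rfl | hx
  · simpa using (exp_pos (-1)).le
  simpa [negMulLog, exp_log hx, mul_comm] using mul_exp_neg_le_exp_neg_one (-log x)

lemma sum_negMulLog_le {ι : Type*} (s : Finset ι) (p : ι → ℝ) (hp : ∀ i ∈ s, 0 ≤ p i) :
    ∑ i ∈ s, negMulLog (p i) ≤
      (∑ i ∈ s, p i) * log #s + negMulLog (∑ i ∈ s, p i) := by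
  rcases s.eq_empty_or_nonempty with rfl | hs
  · simp
  have hn : (0 : ℝ) < #s := by exact_mod_cast hs.card_pos
  have jensen := concaveOn_negMulLog.le_map_sum (t := s) (w := fun _ ↦ (#s : ℝ)⁻¹) (p := p)
    (fun _ _ ↦ by positivity) (by simp [hn.ne']) hp
  simp only [smul_eq_mul, ← mul_sum, negMulLog_mul] at jensen
  have hinv : negMulLog (#s : ℝ)⁻¹ = (#s : ℝ)⁻¹ * log #s := by
    simp [negMulLog, log_inv]
  rw [hinv] at jensen
  have := mul_le_mul_of_nonneg_left jensen hn.le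
  field_simp at this
  linarith

lemma sq_mul_le_of_mul_le_exp {q a s : ℝ} (hq : 0 < q) (ha : 0 < a)
    (h : q * a ≤ exp (-s ^ 2 / 2)) :
    s ^ 2 * a ≤ 2 * (negMulLog a - a * log q) := by
  have hlog : log q + log a ≤ -s ^ 2 / 2 := by
    rw [← log_mul hq.ne' ha.ne', ← log_exp (-s ^ 2 / 2)]
    exact log_le_log (by positivity) h
  have := mul_le_mul_of_nonneg_left hlog ha.le
  rw [negMulLog]
  nlinarith

lemma sqrt_two_pi_mul_gphi (x : ℝ) : sqrt (2 * π) * gphi x = exp (-x ^ 2 / 2) := by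
  have : sqrt (2 * π) ≠ 0 := (sqrt_pos.mpr (by positivity)).ne'
  rw [gphi, ← mul_assoc, mul_inv_cancel₀ this, one_mul]

lemma gphi_pos (x : ℝ) : 0 < gphi x := by
  unfold gphi
  positivity

lemma pdens_pos {σ1 σ2 : ℝ} (hσ1 : 0 < σ1) (hσ2 : 0 < σ2) (t1 t2 x1 x2 : ℝ) :
    0 < pdens σ1 σ2 t1 t2 x1 x2 := by
  unfold pdens
  have := gphi_pos ((x1 - t1) / σ1)
  have := gphi_pos ((x2 - t2) / σ2)
  positivity

lemma two_pi_mul_mul_pdens_le {σ1 σ2 : ℝ} (hσ1 : 0 < σ1) (hσ2 : 0 < σ2) (t1 t2 x1 x2 : ℝ) :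
    2 * π * σ1 * σ2 * pdens σ1 σ2 t1 t2 x1 x2 ≤ exp (-((x1 - t1) / σ1) ^ 2 / 2) := by
  have hs : sqrt (2 * π) * sqrt (2 * π) = 2 * π := mul_self_sqrt (by positivity)
  have hprod : 2 * π * σ1 * σ2 * pdens σ1 σ2 t1 t2 x1 x2 =
      exp (-((x1 - t1) / σ1) ^ 2 / 2) * exp (-((x2 - t2) / σ2) ^ 2 / 2) := by
    rw [← sqrt_two_pi_mul_gphi, ← sqrt_two_pi_mul_gphi, pdens]
    field_simp
    linear_combination (-(gphi ((x1 - t1) / σ1) * gphi ((x2 - t2) / σ2))) * hs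
  rw [hprod]
  apply mul_le_of_le_one_right (exp_pos _).le
  rw [exp_le_one_iff]
  nlinarith [sq_nonneg ((x2 - t2) / σ2)]

lemma sq_sub_mul_pdens_le {σ1 σ2 : ℝ} (hσ1 : 0 < σ1) (hσ2 : 0 < σ2) (t1 t2 x1 x2 : ℝ) :
    (t1 - x1) ^ 2 * pdens σ1 σ2 t1 t2 x1 x2 ≤
      2 * σ1 ^ 2 * (negMulLog (pdens σ1 σ2 t1 t2 x1 x2) -
        pdens σ1 σ2 t1 t2 x1 x2 * log (2 * π * σ1 * σ2)) := by
  have h := sq_mul_le_of_mul_le_exp (by positivity) (pdens_pos hσ1 hσ2 t1 t2 x1 x2)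
    (two_pi_mul_mul_pdens_le hσ1 hσ2 t1 t2 x1 x2)
  have hsq : (t1 - x1) ^ 2 = σ1 ^ 2 * ((x1 - t1) / σ1) ^ 2 := by
    field_simp
    ring
  rw [hsq]
  nlinarith [mul_le_mul_of_nonneg_left h (sq_nonneg σ1)]

lemma sum_sq_sub_mul_pdens_le {ι : Type*} (s : Finset ι) (hs : s.Nonempty) {σ1 σ2 : ℝ}
    (hσ1 : 0 < σ1) (hσ2 : 0 < σ2) (t1 t2 : ι → ℝ) (x1 x2 : ℝ) :
    ∑ i ∈ s, (t1 i - x1) ^ 2 * pdens σ1 σ2 (t1 i) (t2 i) x1 x2 ≤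
      2 * σ1 ^ 2 * ((∑ i ∈ s, pdens σ1 σ2 (t1 i) (t2 i) x1 x2) * log (#s / (2 * π * σ1 * σ2)) +
        negMulLog (∑ i ∈ s, pdens σ1 σ2 (t1 i) (t2 i) x1 x2)) := by
  set q := 2 * π * σ1 * σ2
  set p := fun i ↦ pdens σ1 σ2 (t1 i) (t2 i) x1 x2
  set y := ∑ i ∈ s, p i
  have hq : 0 < q := by positivity
  have hn : (#s : ℝ) ≠ 0 := by exact_mod_cast hs.card_pos.ne'
  calc ∑ i ∈ s, (t1 i - x1) ^ 2 * p i
      ≤ ∑ i ∈ s, 2 * σ1 ^ 2 * (negMulLog (p i) - p i * log q) :=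
        sum_le_sum fun i _ ↦ sq_sub_mul_pdens_le hσ1 hσ2 _ _ _ _
    _ = 2 * σ1 ^ 2 * (∑ i ∈ s, negMulLog (p i) - y * log q) := by
      rw [← mul_sum, sum_sub_distrib, sum_mul]
    _ ≤ 2 * σ1 ^ 2 * (y * log #s + negMulLog y - y * log q) := by
      gcongr
      exact sum_negMulLog_le s p fun i _ ↦ (pdens_pos hσ1 hσ2 _ _ _ _).le
    _ = 2 * σ1 ^ 2 * (y * log (#s / q) + negMulLog y) := by
      rw [log_div hn hq.ne']
      ring

lemma mul_add_negMulLog_div_le {ρ y L : ℝ} (hρ0 : 0 < ρ) (hρ1 : ρ ≤ 1) (hy : 0 ≤ y)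
    (hL : exp (-1) ≤ L) : (y * L + negMulLog y) / (ρ + y) ≤ L / ρ := by
  have hent := (negMulLog_le_exp_neg_one hy).trans hL
  have hL0 : 0 ≤ L := (exp_pos _).le.trans hL
  rw [div_le_div_iff₀ (by positivity) hρ0]
  nlinarith [mul_le_mul_of_nonneg_left hρ1 (mul_nonneg hy hL0),
    mul_le_mul_of_nonneg_left hent hρ0.le]

/-- Uniform bound on the regularized posterior second moment: for `ρ ∈ (0,1]`,
all `(x1, x2)`, and `n ≥ 2πσ1σ2 e^{1/e}`,
`Σ_j (t_{j1}−x1)² p_j / (ρ + Σ_j p_j) ≤ (2σ1²/ρ) log(n/(2πσ1σ2))`. -/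
theorem stmt12 (n : ℕ) (σ1 σ2 ρ : ℝ) (hσ1 : 0 < σ1) (hσ2 : 0 < σ2)
    (hρ0 : 0 < ρ) (hρ1 : ρ ≤ 1)
    (hn : 2 * Real.pi * σ1 * σ2 * Real.exp ((Real.exp 1)⁻¹) ≤ (n : ℝ))
    (t : Fin n → Fin 2 → ℝ) (x1 x2 : ℝ) :
    (∑ j : Fin n, (t j 0 - x1) ^ 2 * pdens σ1 σ2 (t j 0) (t j 1) x1 x2) /
        (ρ + ∑ j : Fin n, pdens σ1 σ2 (t j 0) (t j 1) x1 x2) ≤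
      2 * σ1 ^ 2 / ρ * Real.log ((n : ℝ) / (2 * Real.pi * σ1 * σ2)) := by
  set y := ∑ j, pdens σ1 σ2 (t j 0) (t j 1) x1 x2
  set L := log (n / (2 * π * σ1 * σ2))
  have hn0 : (0 : ℝ) < n := lt_of_lt_of_le (by positivity) hn
  have hL : exp (-1) ≤ L := by
    rw [le_log_iff_exp_le (by positivity), le_div_iff₀ (by positivity), exp_neg, mul_comm]
    exact hn
  have hy : 0 ≤ y := sum_nonneg fun j _ ↦ (pdens_pos hσ1 hσ2 _ _ _ _).le
  have hnum := sum_sq_sub_mul_pdens_le univ ⟨⟨0, mod_cast hn0⟩, mem_univ _⟩ hσ1 hσ2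
    (fun j ↦ t j 0) (fun j ↦ t j 1) x1 x2
  rw [card_univ, Fintype.card_fin] at hnum
  calc _ ≤ 2 * σ1 ^ 2 * ((y * L + negMulLog y) / (ρ + y)) := by
        rw [mul_div_assoc']
        exact div_le_div_of_nonneg_right hnum (by positivity)
    _ ≤ 2 * σ1 ^ 2 * (L / ρ) :=
      mul_le_mul_of_nonneg_left (mul_add_negMulLog_div_le hρ0 hρ1 hy hL) (by positivity)
    _ = 2 * σ1 ^ 2 / ρ * L := by ring
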